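/- arXiv:1709.09096 — 2 statements merged into one kernel-verified Lean document; each statement's English description precedes it below -/
import Mathlib

section
/- Let M and N be bilinear vector spaces over a field k, and equip M ⊗_k N with the form ⟨m⊗n, m'⊗n'⟩ = ⟨m,m'⟩_M · ⟨n,n'⟩_N. Then the left radical of the tensor product satisfies (M ⊗_k N)^⊥ = M^⊥ ⊗_k N + M ⊗_k N^⊥. In particular, if M and N are nondegenerate then so is M ⊗_k N. -/
/-!
Viewed as a map `M ⊗ N → (M ⊗ N)^*`, the form `B₁ ⊗ B₂` is `map B₁ B₂ : M ⊗ N → M^* ⊗ N^*`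
followed by the canonical map `M^* ⊗ N^* → (M ⊗ N)^*`, which is injective over a field. So the
radical is `ker (map B₁ B₂)`. Factoring each `Bᵢ` as a surjection onto its range followed by an
inclusion, the inclusions stay injective after tensoring (flatness), and right exactness of `⊗`
computes the kernel of the tensored surjections as `M^⊥ ⊗ N + M ⊗ N^⊥`.
-/

open TensorProduct Module
open LinearMap (ker range lTensor rTensor)

section

variable {R M N P Q : Type*} [CommRing R] [AddCommGroup M] [AddCommGroup N] [AddCommGroup P]
  [AddCommGroup Q] [Module R M] [Module R N] [Module R P] [Module R Q]

theorem dualTensorHom_finsupp_self_injective (ι : Type*) :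
    Function.Injective (dualTensorHom R M (ι →₀ R)) := by
  classical
  have hR : Function.Injective (dualTensorHom R M R) := by
    rw [dualTensorHom_self_right]
    exact (TensorProduct.rid R (Dual R M)).injective
  rw [dualTensorHom_finsupp, LinearMap.coe_comp, LinearMap.coe_comp]
  exact (LinearMap.finsuppLinearMap_injective ..).comp
    ((Finsupp.mapRange_injective _ (map_zero _) hR).comp (LinearEquiv.injective _))

/-- A projective `N` is a retract of a free module `F`, and `Dual M ⊗ N → Hom(M, N)` embeds
into `Dual M ⊗ F → Hom(M, F)`, which is injective coordinatewise. -/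
theorem dualTensorHom_injective_of_projective [Projective R N] :
    Function.Injective (dualTensorHom R M N) := by
  obtain ⟨s, hs⟩ := projective_def'.mp ‹Projective R N›
  have hs_inj : Function.Injective (s.lTensor (Dual R M)) :=
    LinearMap.injective_of_comp_eq_id _ ((Finsupp.linearCombination R id).lTensor _) <| by
      rw [← LinearMap.lTensor_comp, hs, LinearMap.lTensor_id]
  refine .of_comp (f := s.compRight R) ?_
  rw [← LinearMap.coe_comp, ← dualTensorHom_comp_lTensor, LinearMap.coe_comp]
  exact (dualTensorHom_finsupp_self_injective N).comp hs_inj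

theorem TensorProduct.lcurry_comp_dualDistrib :
    lcurry (RingHom.id R) M N R ∘ₗ dualDistrib R M N = dualTensorHom R M (Dual R N) := by
  ext f g m n
  simp

theorem TensorProduct.dualDistrib_injective [Projective R (Dual R N)] :
    Function.Injective (dualDistrib R M N) := by
  refine .of_comp (f := lcurry (RingHom.id R) M N R) ?_
  rw [← LinearMap.coe_comp, lcurry_comp_dualDistrib]
  exact dualTensorHom_injective_of_projective

theorem LinearMap.exact_subtype_ker_rangeRestrict (f : M →ₗ[R] P) :
    Function.Exact (ker f).subtype f.rangeRestrict := by
  rw [LinearMap.exact_iff, LinearMap.ker_rangeRestrict, Submodule.range_subtype]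

theorem TensorProduct.ker_map_eq_sup (f : M →ₗ[R] P) (g : N →ₗ[R] Q) [Flat R P]
    [Flat R (range g)] :
    ker (map f g) = range (rTensor N (ker f).subtype) ⊔ range (lTensor M (ker g).subtype) := by
  have hfac : map f g = mapIncl (range f) (range g) ∘ₗ map f.rangeRestrict g.rangeRestrict := by
    rw [mapIncl, ← map_comp]
    rfl
  rw [hfac, LinearMap.ker_comp, LinearMap.ker_eq_bot_of_injective (map_injective_of_flat_flat _ _
      (range f).injective_subtype (range g).injective_subtype), Submodule.comap_bot]
  exact (map_ker f.exact_subtype_ker_rangeRestrict f.surjective_rangeRestrict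
    g.exact_subtype_ker_rangeRestrict g.surjective_rangeRestrict).trans (sup_comm _ _)

theorem LinearMap.BilinForm.tmul_eq_dualDistrib_comp_map (B₁ : LinearMap.BilinForm R M)
    (B₂ : LinearMap.BilinForm R N) : B₁.tmul B₂ = dualDistrib R M N ∘ₗ map B₁ B₂ := by
  ext m n m' n'
  simp [mul_comm]

end

/-- For bilinear vector spaces `M`, `N` over a field `k`, the left radical of
the tensor product form `⟨m⊗n, m'⊗n'⟩ = ⟨m,m'⟩·⟨n,n'⟩` is
`M^⊥ ⊗ N + M ⊗ N^⊥`; in particular the tensor product of nondegenerate forms is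
nondegenerate. -/
theorem bilin_radical_of_tmul
    {k M N : Type*} [Field k] [AddCommGroup M] [AddCommGroup N]
    [Module k M] [Module k N]
    (B₁ : LinearMap.BilinForm k M) (B₂ : LinearMap.BilinForm k N) :
    LinearMap.ker (B₁.tmul B₂) =
      LinearMap.range (TensorProduct.map (LinearMap.ker B₁).subtype LinearMap.id) ⊔
        LinearMap.range (TensorProduct.map LinearMap.id (LinearMap.ker B₂).subtype) ∧
    (LinearMap.ker B₁ = ⊥ → LinearMap.ker B₂ = ⊥ → LinearMap.ker (B₁.tmul B₂) = ⊥) := by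
  have hker : ker (B₁.tmul B₂) = ker (map B₁ B₂) := by
    rw [LinearMap.BilinForm.tmul_eq_dualDistrib_comp_map, LinearMap.ker_comp,
      LinearMap.ker_eq_bot_of_injective dualDistrib_injective, Submodule.comap_bot]
  -- instance search does not find this for a submodule of a dual space
  have := Free.of_divisionRing k (range B₂)
  refine ⟨hker.trans (ker_map_eq_sup B₁ B₂), fun h₁ h₂ => ?_⟩
  rw [hker]
  exact LinearMap.ker_eq_bot_of_injective <|
    map_injective_of_flat_flat _ _ (LinearMap.ker_eq_bot.mp h₁) (LinearMap.ker_eq_bot.mp h₂)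
end

section
/- Let A be a *-algebra over ℂ and φ : A → ℂ a *-linear functional (φ(a*) = conj(φ(a))). Then the following are equivalent: (1) there exists a Hermitian A-*-module M with a vector m such that φ(a) = ⟨a·m, m⟩ for all a; (2) there exists such a representing module that is cyclic, and it is unique up to a unique isometric cyclic isomorphism. (GNS existence and uniqueness without positivity.) -/
open ComplexConjugate

universe u

variable (A : Type u) [Ring A] [Algebra ℂ A] [StarRing A] [StarModule ℂ A]

/-- A representation of a linear functional `φ` on a `*`-algebra `A`:
a nondegenerate Hermitian `*`-module over `A` together with a vector `m`
such that `φ a = ⟨a • m, m⟩` for all `a`. -/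
structure GNSRep (φ : A →ₗ[ℂ] ℂ) : Type (u + 1) where
  M : Type u
  [isAddCommGroup : AddCommGroup M]
  [isCModule : Module ℂ M]
  [isAModule : Module A M]
  [isTower : IsScalarTower ℂ A M]
  B : M → M → ℂ
  add_left : ∀ x y z : M, B (x + y) z = B x z + B y z
  smul_left : ∀ (c : ℂ) (x y : M), B (c • x) y = c * B x y
  conj_symm : ∀ x y : M, B y x = conj (B x y)
  nondeg : ∀ x : M, (∀ y : M, B x y = 0) → x = 0
  star_adjoint : ∀ (a : A) (x y : M), B (a • x) y = B x (star a • y)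
  m : M
  represents : ∀ a : A, B (a • m) m = φ a

attribute [instance] GNSRep.isAddCommGroup GNSRep.isCModule GNSRep.isAModule GNSRep.isTower


section GNSAux
variable {A : Type u} [Ring A] [Algebra ℂ A] [StarRing A] [StarModule ℂ A]
variable (φ : A →ₗ[ℂ] ℂ)

def gnsRad : Submodule A A where
  carrier := {a | ∀ b : A, φ (star b * a) = 0}
  add_mem' := by intro a b ha hb; intro c; simp [mul_add, ha c, hb c]
  zero_mem' := by intro b; simp
  smul_mem' := by
    intro c a ha b
    have := ha (star c * b)
    simpa [star_mul, mul_assoc] using this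

lemma gns_herm (hstar : ∀ a : A, φ (star a) = conj (φ a)) (a b : A) :
    φ (star b * a) = conj (φ (star a * b)) := by
  have h := hstar (star b * a)
  rw [star_mul, star_star] at h
  rw [h, Complex.conj_conj]

example : Module ℂ (A ⧸ gnsRad φ) := inferInstance
example : IsScalarTower ℂ A (A ⧸ gnsRad φ) := inferInstance

noncomputable def gnsB (hstar : ∀ a : A, φ (star a) = conj (φ a)) :
    (A ⧸ gnsRad φ) → (A ⧸ gnsRad φ) → ℂ := fun x y =>
  Quotient.liftOn₂' x y (fun a b => φ (star b * a)) (by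
    intro a₁ a₂ b₁ b₂ h₁ h₂
    have h1 : a₁ - b₁ ∈ gnsRad φ := (Submodule.quotientRel_def _).mp h₁
    have h2 : a₂ - b₂ ∈ gnsRad φ := (Submodule.quotientRel_def _).mp h₂
    have e1 : φ (star a₂ * a₁) = φ (star a₂ * b₁) := by
      have := h1 a₂
      rw [mul_sub, map_sub, sub_eq_zero] at this; exact this
    have e2 : φ (star a₂ * b₁) = φ (star b₂ * b₁) := by
      have h2' := h2 b₁
      have h0 : φ (star (a₂ - b₂) * b₁) = 0 := by
        rw [gns_herm φ hstar, h2', map_zero]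
      rw [star_sub, sub_mul, map_sub, sub_eq_zero] at h0; exact h0
    rw [e1, e2])

lemma gnsB_mk (hstar : ∀ a : A, φ (star a) = conj (φ a)) (a b : A) :
    gnsB φ hstar (Submodule.Quotient.mk a) (Submodule.Quotient.mk b) = φ (star b * a) := rfl

variable (A) in
noncomputable def gnsRep (hstar : ∀ a : A, φ (star a) = conj (φ a)) : GNSRep A φ where
  M := A ⧸ gnsRad φ
  B := gnsB φ hstar
  add_left := by
    intro x y z
    obtain ⟨a, rfl⟩ := Submodule.Quotient.mk_surjective _ x
    obtain ⟨b, rfl⟩ := Submodule.Quotient.mk_surjective _ y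
    obtain ⟨c, rfl⟩ := Submodule.Quotient.mk_surjective _ z
    rw [← Submodule.Quotient.mk_add]
    simp only [gnsB_mk, mul_add, map_add]
  smul_left := by
    intro c x y
    obtain ⟨a, rfl⟩ := Submodule.Quotient.mk_surjective _ x
    obtain ⟨b, rfl⟩ := Submodule.Quotient.mk_surjective _ y
    rw [show c • (Submodule.Quotient.mk a : A ⧸ gnsRad φ) = Submodule.Quotient.mk (c • a) from
      Submodule.Quotient.mk_smul _ c a]
    rw [gnsB_mk, gnsB_mk, mul_smul_comm, map_smul, smul_eq_mul]
  conj_symm := by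
    intro x y
    obtain ⟨a, rfl⟩ := Submodule.Quotient.mk_surjective _ x
    obtain ⟨b, rfl⟩ := Submodule.Quotient.mk_surjective _ y
    rw [gnsB_mk, gnsB_mk, gns_herm φ hstar]
  nondeg := by
    intro x hx
    obtain ⟨a, rfl⟩ := Submodule.Quotient.mk_surjective _ x
    rw [Submodule.Quotient.mk_eq_zero]
    intro b
    exact hx (Submodule.Quotient.mk b)
  star_adjoint := by
    intro a x y
    obtain ⟨b, rfl⟩ := Submodule.Quotient.mk_surjective _ x
    obtain ⟨c, rfl⟩ := Submodule.Quotient.mk_surjective _ y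
    rw [show a • (Submodule.Quotient.mk b : A ⧸ gnsRad φ) = Submodule.Quotient.mk (a * b) from rfl]
    rw [show star a • (Submodule.Quotient.mk c : A ⧸ gnsRad φ)
        = Submodule.Quotient.mk (star a * c) from rfl]
    rw [gnsB_mk, gnsB_mk, star_mul, star_star, mul_assoc]
  m := Submodule.Quotient.mk 1
  represents := by
    intro a
    rw [show a • (Submodule.Quotient.mk 1 : A ⧸ gnsRad φ) = Submodule.Quotient.mk a from by
      simp [← Submodule.Quotient.mk_smul, smul_eq_mul]]
    rw [gnsB_mk]
    simp

lemma gnsRep_cyclic (hstar : ∀ a : A, φ (star a) = conj (φ a)) :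
    Submodule.span A {(gnsRep A φ hstar).m} = ⊤ := by
  rw [eq_top_iff]
  rintro x -
  obtain ⟨a, rfl⟩ := Submodule.Quotient.mk_surjective _ x
  refine Submodule.mem_span_singleton.mpr ⟨a, ?_⟩
  show a • (Submodule.Quotient.mk 1 : A ⧸ gnsRad φ) = Submodule.Quotient.mk a
  simp [← Submodule.Quotient.mk_smul, smul_eq_mul]

lemma GNSRep.B_zero_left (r : GNSRep A φ) (y : r.M) : r.B 0 y = 0 := by
  have h := r.smul_left 0 y y
  rw [zero_smul] at h
  rw [h, zero_mul]

lemma GNSRep.B_smul_smul (r : GNSRep A φ) (a b : A) :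
    r.B (a • r.m) (b • r.m) = φ (star b * a) := by
  have h := r.star_adjoint (star b) (a • r.m) r.m
  rw [star_star] at h
  rw [← h, smul_smul, r.represents]

noncomputable def toSpan (r : GNSRep A φ) : A →ₗ[A] r.M :=
  LinearMap.toSpanSingleton A r.M r.m

lemma toSpan_apply (r : GNSRep A φ) (a : A) : toSpan φ r a = a • r.m := rfl

lemma toSpan_surjective (r : GNSRep A φ) (h : Submodule.span A {r.m} = ⊤) :
    Function.Surjective (toSpan φ r) := by
  intro x
  have hx : x ∈ Submodule.span A {r.m} := h ▸ Submodule.mem_top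
  obtain ⟨a, ha⟩ := Submodule.mem_span_singleton.mp hx
  exact ⟨a, ha⟩

lemma ker_toSpan (r : GNSRep A φ) (h : Submodule.span A {r.m} = ⊤) :
    LinearMap.ker (toSpan φ r) = gnsRad φ := by
  ext a
  simp only [LinearMap.mem_ker, toSpan_apply]
  constructor
  · intro ha b
    rw [← GNSRep.B_smul_smul φ r a b, ha, GNSRep.B_zero_left]
  · intro ha
    apply r.nondeg
    intro y
    obtain ⟨b, rfl⟩ := toSpan_surjective φ r h y
    rw [toSpan_apply, GNSRep.B_smul_smul φ r a b]
    exact ha b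

lemma cyclic_unique_iso (r r' : GNSRep A φ) (h : Submodule.span A {r.m} = ⊤)
    (h' : Submodule.span A {r'.m} = ⊤) :
    ∃! e : r.M ≃ₗ[A] r'.M, e r.m = r'.m ∧ ∀ x y : r.M, r'.B (e x) (e y) = r.B x y := by
  have hs := toSpan_surjective φ r h
  have hs' := toSpan_surjective φ r' h'
  have hker : LinearMap.ker (toSpan φ r) = LinearMap.ker (toSpan φ r') := by
    rw [ker_toSpan φ r h, ker_toSpan φ r' h']
  let q := LinearMap.quotKerEquivOfSurjective _ hs
  let q' := LinearMap.quotKerEquivOfSurjective _ hs'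
  let e0 : r.M ≃ₗ[A] r'.M := q.symm.trans ((Submodule.quotEquivOfEq _ _ hker).trans q')
  have key : ∀ a : A, e0 (a • r.m) = a • r'.m := by
    intro a
    have h1 : q (Submodule.Quotient.mk a) = a • r.m := rfl
    have h2 : q.symm (a • r.m) = Submodule.Quotient.mk a := by
      rw [LinearEquiv.symm_apply_eq, h1]
    show q' ((Submodule.quotEquivOfEq _ _ hker) (q.symm (a • r.m))) = a • r'.m
    rw [h2]
    rfl
  refine ⟨e0, ⟨?_, ?_⟩, ?_⟩
  · have := key 1
    rwa [one_smul, one_smul] at this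
  · intro x y
    obtain ⟨a, rfl⟩ := hs x
    obtain ⟨b, rfl⟩ := hs y
    rw [toSpan_apply, toSpan_apply, key a, key b,
      GNSRep.B_smul_smul φ r' a b, GNSRep.B_smul_smul φ r a b]
  · rintro e ⟨hm, -⟩
    apply LinearEquiv.toLinearMap_injective
    apply LinearMap.ext
    intro x
    obtain ⟨a, rfl⟩ := hs x
    rw [toSpan_apply]
    show e (a • r.m) = e0 (a • r.m)
    rw [map_smul, map_smul, hm]
    have := key 1
    rw [one_smul, one_smul] at this
    rw [this]

end GNSAux

/-- For a `*`-linear functional `φ` on a `*`-algebra `A` the following are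
equivalent: (1) `φ` has a representation on a nondegenerate Hermitian `*`-module; (2) it
has a cyclic such representation, which is moreover unique up to a unique isometric
cyclic isomorphism. -/
theorem gns_representability_iff (φ : A →ₗ[ℂ] ℂ)
    (hstar : ∀ a : A, φ (star a) = conj (φ a)) :
    Nonempty (GNSRep A φ) ↔
      ∃ r : GNSRep A φ, Submodule.span A {r.m} = ⊤ ∧
        ∀ r' : GNSRep A φ, Submodule.span A {r'.m} = ⊤ →
          ∃! e : r.M ≃ₗ[A] r'.M,
            e r.m = r'.m ∧ ∀ x y : r.M, r'.B (e x) (e y) = r.B x y := by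
  constructor
  · intro _
    exact ⟨gnsRep A φ hstar, gnsRep_cyclic φ hstar,
      fun r' h' => cyclic_unique_iso φ _ r' (gnsRep_cyclic φ hstar) h'⟩
  · rintro ⟨r, -, -⟩
    exact ⟨r⟩
end
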